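/- With (γ')^{-1/2}(z) = cz + d for γ(z) = (az+b)/(cz+d), ad-bc = 1: if u, v are linearly independent solutions of the Fuchs equation u'' + (1/2)T u = 0 with T∘γ·(γ')^2 = T on a connected domain, then there exists a constant matrix χ ∈ SL(2,ℂ) such that (cz+d)·(u(γz), v(γz))ᵀ = χ·(u(z), v(z))ᵀ for all z. -/

import Mathlib

/-!
Since `ad - bc = 1`, the first-order terms cancel when `(cz + d)·w(γz)` is differentiated twice,
leaving `w''(γz)/(cz + d)^3`; as `Q(γz) = (cz + d)^4 Q(z)` for a quadratic differential, this
weight maps solutions of `w'' + Q w = 0` to solutions. On a connected domain the Wronskian of two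
solutions is constant, so every solution is a constant combination of a pair `u, v` with nonzero
Wronskian; the coefficients of the transformed pair form `χ`, and `det χ = 1` because the
transformation preserves Wronskians.
-/

noncomputable def wronskian (f g : ℂ → ℂ) (z : ℂ) : ℂ := f z * deriv g z - deriv f z * g z

theorem mul_wronskian (u v w : ℂ → ℂ) (z : ℂ) :
    w z * wronskian u v z = wronskian w v z * u z + wronskian u w z * v z := by
  unfold wronskian; ring

-- The Plücker relation for the `2 × 2` minors of the matrix with rows `(f z, f' z)`.
theorem wronskian_mul_wronskian_sub (u v p q : ℂ → ℂ) (z : ℂ) :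
    wronskian p v z * wronskian u q z - wronskian u p z * wronskian q v z =
      wronskian u v z * wronskian p q z := by
  unfold wronskian; ring

structure IsFuchsSolutionOn (Q : ℂ → ℂ) (U : Set ℂ) (w : ℂ → ℂ) : Prop where
  differentiableOn : DifferentiableOn ℂ w U
  differentiableOn_deriv : DifferentiableOn ℂ (deriv w) U
  deriv_deriv_add : ∀ z ∈ U, deriv (deriv w) z + Q z * w z = 0

namespace IsFuchsSolutionOn

variable {Q : ℂ → ℂ} {U : Set ℂ} {u v w : ℂ → ℂ}

theorem hasDerivAt (hw : IsFuchsSolutionOn Q U w) (hU : IsOpen U) {z : ℂ} (hz : z ∈ U) :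
    HasDerivAt w (deriv w z) z :=
  (hw.differentiableOn.differentiableAt (hU.mem_nhds hz)).hasDerivAt

theorem hasDerivAt_deriv (hw : IsFuchsSolutionOn Q U w) (hU : IsOpen U) {z : ℂ} (hz : z ∈ U) :
    HasDerivAt (deriv w) (-(Q z * w z)) z := by
  rw [← eq_neg_of_add_eq_zero_left (hw.deriv_deriv_add z hz)]
  exact (hw.differentiableOn_deriv.differentiableAt (hU.mem_nhds hz)).hasDerivAt

theorem hasDerivAt_wronskian (hu : IsFuchsSolutionOn Q U u) (hv : IsFuchsSolutionOn Q U v)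
    (hU : IsOpen U) {z : ℂ} (hz : z ∈ U) : HasDerivAt (wronskian u v) 0 z := by
  have h := ((hu.hasDerivAt hU hz).mul (hv.hasDerivAt_deriv hU hz)).sub
    ((hu.hasDerivAt_deriv hU hz).mul (hv.hasDerivAt hU hz))
  exact h.congr_deriv (by ring)

theorem wronskian_eq (hu : IsFuchsSolutionOn Q U u) (hv : IsFuchsSolutionOn Q U v)
    (hU : IsOpen U) (hUc : IsPreconnected U) {z z₀ : ℂ} (hz : z ∈ U) (hz₀ : z₀ ∈ U) :
    wronskian u v z = wronskian u v z₀ :=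
  hU.is_const_of_deriv_eq_zero hUc
    (fun _ hx => (hu.hasDerivAt_wronskian hv hU hx).differentiableAt.differentiableWithinAt)
    (fun _ hx => (hu.hasDerivAt_wronskian hv hU hx).deriv) hz hz₀

theorem eq_wronskian_div_mul_add (hu : IsFuchsSolutionOn Q U u) (hv : IsFuchsSolutionOn Q U v)
    (hw : IsFuchsSolutionOn Q U w) (hU : IsOpen U) (hUc : IsPreconnected U) {z z₀ : ℂ}
    (hz : z ∈ U) (hz₀ : z₀ ∈ U) (huv : wronskian u v z₀ ≠ 0) :
    w z = wronskian w v z₀ / wronskian u v z₀ * u z +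
      wronskian u w z₀ / wronskian u v z₀ * v z := by
  rw [← hw.wronskian_eq hv hU hUc hz hz₀, ← hu.wronskian_eq hw hU hUc hz hz₀,
    ← hu.wronskian_eq hv hU hUc hz hz₀] at *
  field_simp
  linear_combination mul_wronskian u v w z

end IsFuchsSolutionOn

section Mobius

variable {a b c d : ℂ}

theorem hasDerivAt_affine (c d z : ℂ) : HasDerivAt (fun w => c * w + d) c z := by
  simpa using ((hasDerivAt_id z).const_mul c).add_const d

noncomputable def mobius (a b c d z : ℂ) : ℂ := (a * z + b) / (c * z + d)

noncomputable def mobiusPullback (a b c d : ℂ) (w : ℂ → ℂ) (z : ℂ) : ℂ := (c * z + d) * w (mobius a b c d z)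

theorem hasDerivAt_mobius (had : a * d - b * c = 1) {z : ℂ} (hz : c * z + d ≠ 0) :
    HasDerivAt (mobius a b c d) (((c * z + d) ^ 2)⁻¹) z := by
  refine ((hasDerivAt_affine a b z).div (hasDerivAt_affine c d z) hz).congr_deriv ?_
  rw [show a * (c * z + d) - (a * z + b) * c = 1 by linear_combination had, one_div]

theorem hasDerivAt_mobiusPullback (had : a * d - b * c = 1) {w : ℂ → ℂ} {w' z : ℂ}
    (hz : c * z + d ≠ 0) (hw : HasDerivAt w w' (mobius a b c d z)) :
    HasDerivAt (mobiusPullback a b c d w) (c * w (mobius a b c d z) + w' / (c * z + d)) z := by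
  have h := (hasDerivAt_affine c d z).mul (hw.comp z (hasDerivAt_mobius had hz))
  refine h.congr_deriv ?_
  simp only [Function.comp_apply]
  field_simp

theorem hasDerivAt_mobiusPullback_deriv (had : a * d - b * c = 1) {w : ℂ → ℂ} {w'' z : ℂ}
    (hz : c * z + d ≠ 0) (hw : HasDerivAt w (deriv w (mobius a b c d z)) (mobius a b c d z))
    (hw' : HasDerivAt (deriv w) w'' (mobius a b c d z)) :
    HasDerivAt (fun z => c * w (mobius a b c d z) + deriv w (mobius a b c d z) / (c * z + d))
      (w'' / (c * z + d) ^ 3) z := by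
  have hγ := hasDerivAt_mobius had hz
  have h := ((hw.comp z hγ).const_mul c).add
    ((hw'.comp z hγ).div (hasDerivAt_affine c d z) hz)
  refine h.congr_deriv ?_
  simp only [Function.comp_apply]
  field_simp
  ring

theorem wronskian_mobiusPullback (had : a * d - b * c = 1) {f g : ℂ → ℂ} {z : ℂ}
    (hz : c * z + d ≠ 0) (hf : DifferentiableAt ℂ f (mobius a b c d z))
    (hg : DifferentiableAt ℂ g (mobius a b c d z)) :
    wronskian (mobiusPullback a b c d f) (mobiusPullback a b c d g) z =
      wronskian f g (mobius a b c d z) := by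
  unfold wronskian
  rw [(hasDerivAt_mobiusPullback had hz hf.hasDerivAt).deriv,
    (hasDerivAt_mobiusPullback had hz hg.hasDerivAt).deriv]
  unfold mobiusPullback
  field_simp
  ring

theorem isFuchsSolutionOn_mobiusPullback {Q : ℂ → ℂ} {U : Set ℂ} {w : ℂ → ℂ}
    (hw : IsFuchsSolutionOn Q U w) (hU : IsOpen U) (had : a * d - b * c = 1)
    (hmaps : ∀ z ∈ U, mobius a b c d z ∈ U) (hden : ∀ z ∈ U, c * z + d ≠ 0)
    (hQ : ∀ z ∈ U, Q (mobius a b c d z) * deriv (mobius a b c d) z ^ 2 = Q z) :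
    IsFuchsSolutionOn Q U (mobiusPullback a b c d w) := by
  have hderiv : ∀ z ∈ U, HasDerivAt (mobiusPullback a b c d w)
      (c * w (mobius a b c d z) + deriv w (mobius a b c d z) / (c * z + d)) z :=
    fun z hz => hasDerivAt_mobiusPullback had (hden z hz) (hw.hasDerivAt hU (hmaps z hz))
  have hderiv2 : ∀ z ∈ U, HasDerivAt (deriv (mobiusPullback a b c d w))
      (-(Q (mobius a b c d z) * w (mobius a b c d z)) / (c * z + d) ^ 3) z := by
    intro z hz
    refine (hasDerivAt_mobiusPullback_deriv had (hden z hz) (hw.hasDerivAt hU (hmaps z hz))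
      (hw.hasDerivAt_deriv hU (hmaps z hz))).congr_of_eventuallyEq ?_
    filter_upwards [hU.mem_nhds hz] with y hy using (hderiv y hy).deriv
  refine ⟨fun z hz => (hderiv z hz).differentiableAt.differentiableWithinAt,
    fun z hz => (hderiv2 z hz).differentiableAt.differentiableWithinAt, fun z hz => ?_⟩
  have hQz := hQ z hz
  rw [(hasDerivAt_mobius had (hden z hz)).deriv] at hQz
  rw [(hderiv2 z hz).deriv, ← hQz, mobiusPullback]
  have := hden z hz
  field_simp
  ring

end Mobius

theorem monodromy_exists_general
    (U : Set ℂ) (hU : IsOpen U) (hUc : IsPreconnected U) (hne : U.Nonempty)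
    (a b c d : ℂ) (had : a * d - b * c = 1)
    (T u v : ℂ → ℂ) (W : ℂ) (hWne : W ≠ 0)
    (hmaps : ∀ z ∈ U, (a * z + b) / (c * z + d) ∈ U)
    (hden : ∀ z ∈ U, c * z + d ≠ 0)
    (hu1 : DifferentiableOn ℂ u U) (hu2 : DifferentiableOn ℂ (deriv u) U)
    (hv1 : DifferentiableOn ℂ v U) (hv2 : DifferentiableOn ℂ (deriv v) U)
    (hu : ∀ z ∈ U, deriv (deriv u) z + (1 / 2) * T z * u z = 0)
    (hv : ∀ z ∈ U, deriv (deriv v) z + (1 / 2) * T z * v z = 0)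
    (hW : ∀ z ∈ U, u z * deriv v z - deriv u z * v z = W)
    (hTtr : ∀ z ∈ U,
      T ((a * z + b) / (c * z + d)) *
        (deriv (fun w => (a * w + b) / (c * w + d)) z) ^ 2 = T z) :
    ∃ χ : Matrix (Fin 2) (Fin 2) ℂ, χ.det = 1 ∧ ∀ z ∈ U,
      (c * z + d) * u ((a * z + b) / (c * z + d)) = χ 0 0 * u z + χ 0 1 * v z ∧
      (c * z + d) * v ((a * z + b) / (c * z + d)) = χ 1 0 * u z + χ 1 1 * v z := by
  obtain ⟨z₀, hz₀⟩ := hne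
  set Q : ℂ → ℂ := fun z => 1 / 2 * T z
  have hQ : ∀ z ∈ U, Q (mobius a b c d z) * deriv (mobius a b c d) z ^ 2 = Q z :=
    fun z hz => by
      show 1 / 2 * T ((a * z + b) / (c * z + d)) * deriv (fun w => (a * w + b) / (c * w + d)) z ^ 2
        = 1 / 2 * T z
      rw [mul_assoc, hTtr z hz]
  have su : IsFuchsSolutionOn Q U u := ⟨hu1, hu2, hu⟩
  have sv : IsFuchsSolutionOn Q U v := ⟨hv1, hv2, hv⟩
  have su' := isFuchsSolutionOn_mobiusPullback su hU had hmaps hden hQ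
  have sv' := isFuchsSolutionOn_mobiusPullback sv hU had hmaps hden hQ
  have hW₀ : wronskian u v z₀ = W := hW z₀ hz₀
  set uγ := mobiusPullback a b c d u
  set vγ := mobiusPullback a b c d v
  refine ⟨!![wronskian uγ v z₀ / W, wronskian u uγ z₀ / W;
    wronskian vγ v z₀ / W, wronskian u vγ z₀ / W], ?_, fun z hz => ?_⟩
  · have hWγ : wronskian u v (mobius a b c d z₀) = W := hW _ (hmaps z₀ hz₀)
    have hdet := wronskian_mul_wronskian_sub u v uγ vγ z₀
    rw [hW₀, wronskian_mobiusPullback had (hden z₀ hz₀)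
      (hu1.differentiableAt (hU.mem_nhds (hmaps z₀ hz₀)))
      (hv1.differentiableAt (hU.mem_nhds (hmaps z₀ hz₀))), hWγ] at hdet
    rw [Matrix.det_fin_two_of]
    field_simp
    linear_combination hdet
  · have hW₀' : wronskian u v z₀ ≠ 0 := hW₀ ▸ hWne
    rw [← hW₀]
    exact ⟨su.eq_wronskian_div_mul_add sv su' hU hUc hz hz₀ hW₀',
      su.eq_wronskian_div_mul_add sv sv' hU hUc hz hz₀ hW₀'⟩

/-- Existence of the monodromy matrix: if `u, v` are linearly independent solutions of
the Fuchs equation `w'' + (1/2)·T·w = 0` on a connected `γ`-invariant open domain, with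
`T` transforming as a quadratic differential under the unit-determinant Möbius map
`γ(z) = (az+b)/(cz+d)`, then there is a constant matrix `χ ∈ SL(2,ℂ)` with
`(cz+d)·(u(γz), v(γz))ᵀ = χ·(u(z), v(z))ᵀ`. -/
theorem monodromy_exists
    (U : Set ℂ) (hU : IsOpen U) (hUc : IsPreconnected U) (hne : U.Nonempty)
    (a b c d : ℂ) (had : a * d - b * c = 1)
    (T u v : ℂ → ℂ) (W : ℂ) (hWne : W ≠ 0)
    (hT : DifferentiableOn ℂ T U)
    (hmaps : ∀ z ∈ U, (a * z + b) / (c * z + d) ∈ U)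
    (hden : ∀ z ∈ U, c * z + d ≠ 0)
    (hu1 : DifferentiableOn ℂ u U) (hu2 : DifferentiableOn ℂ (deriv u) U)
    (hv1 : DifferentiableOn ℂ v U) (hv2 : DifferentiableOn ℂ (deriv v) U)
    (hu : ∀ z ∈ U, deriv (deriv u) z + (1 / 2) * T z * u z = 0)
    (hv : ∀ z ∈ U, deriv (deriv v) z + (1 / 2) * T z * v z = 0)
    (hW : ∀ z ∈ U, u z * deriv v z - deriv u z * v z = W)
    (hTtr : ∀ z ∈ U,
      T ((a * z + b) / (c * z + d)) *
        (deriv (fun w => (a * w + b) / (c * w + d)) z) ^ 2 = T z) :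
    ∃ χ : Matrix (Fin 2) (Fin 2) ℂ, χ.det = 1 ∧ ∀ z ∈ U,
      (c * z + d) * u ((a * z + b) / (c * z + d)) = χ 0 0 * u z + χ 0 1 * v z ∧
      (c * z + d) * v ((a * z + b) / (c * z + d)) = χ 1 0 * u z + χ 1 1 * v z :=
  monodromy_exists_general U hU hUc hne a b c d had T u v W hWne hmaps hden hu1 hu2 hv1 hv2 hu hv hW
    hTtr
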